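/- The Jordan center of a finite tree has cardinality 1 or 2, and if it has cardinality 2 then its two vertices are adjacent. -/

import Mathlib

open SimpleGraph

/-- The eccentricity of a vertex: the maximum distance to any vertex. -/
noncomputable def eccent {V : Type*} (G : SimpleGraph V) (v : V) : ℕ :=
  sSup (Set.range fun w => G.dist v w)

/-- The Jordan center: the set of vertices of minimum eccentricity. -/
def jordanCenter {V : Type*} (G : SimpleGraph V) : Set V :=
  {v | ∀ w, _root_.eccent G v ≤ _root_.eccent G w}

section aux
variable {V : Type*} {T : SimpleGraph V}

lemma tree_path_len (hT : T.IsTree) {u v : V} (p : T.Walk u v) (hp : p.IsPath) :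
    p.length = T.dist u v := by
  classical
  obtain ⟨q, hq⟩ := hT.isConnected.exists_walk_length_eq_dist u v
  have huniq := isAcyclic_iff_path_unique.mp hT.IsAcyclic (v := u) (w := v)
    ⟨p, hp⟩ ⟨q.bypass, q.bypass_isPath⟩
  have h1 : p.length = q.bypass.length := by
    have := congrArg (fun r : T.Path u v => (r : T.Walk u v).length) huniq
    simpa using this
  have h2 : q.bypass.length ≤ T.dist u v := hq ▸ q.length_bypass_le
  exact le_antisymm (h1 ▸ h2) (SimpleGraph.dist_le p)

lemma tree_dist_split (hT : T.IsTree) {u v x : V} (p : T.Walk u v) (hp : p.IsPath)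
    (hx : x ∈ p.support) : T.dist u v = T.dist u x + T.dist x v := by
  classical
  rw [← tree_path_len hT p hp, ← tree_path_len hT _ (hp.takeUntil hx),
    ← tree_path_len hT _ (hp.dropUntil hx)]
  have := congrArg SimpleGraph.Walk.length (p.take_spec hx)
  rw [SimpleGraph.Walk.length_append] at this
  omega

lemma no_triangle (hT : T.IsTree) {a b c : V} (hab : T.Adj a b) (hbc : T.Adj b c)
    (hac : T.Adj a c) : False := by
  have h1 : (SimpleGraph.Walk.cons hab .nil).IsPath := by
    simp [SimpleGraph.Walk.cons_isPath_iff, hab.ne]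
  have h2 : (SimpleGraph.Walk.cons hac (.cons hbc.symm .nil)).IsPath := by
    simp [SimpleGraph.Walk.cons_isPath_iff, hbc.symm.ne, hab.ne, hac.ne]
  have := isAcyclic_iff_path_unique.mp hT.IsAcyclic (v := a) (w := b)
    ⟨_, h1⟩ ⟨_, h2⟩
  have := congrArg (fun r : T.Path a b => (r : T.Walk a b).length) this
  simp at this

variable [Fintype V]

lemma dist_le_eccent (G : SimpleGraph V) (v w : V) : G.dist v w ≤ _root_.eccent G v :=
  le_csSup ((Set.finite_range _).bddAbove) ⟨w, rfl⟩

lemma exists_eccent [Nonempty V] (G : SimpleGraph V) (v : V) :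
    ∃ w, G.dist v w = _root_.eccent G v := by
  have := Nat.sSup_mem (s := Set.range fun w => G.dist v w)
    (Set.range_nonempty _) (Set.finite_range _).bddAbove
  exact this

lemma center_adj (hT : T.IsTree) {u v : V} (hu : u ∈ jordanCenter T)
    (hv : v ∈ jordanCenter T) (hne : u ≠ v) : T.Adj u v := by
  classical
  haveI : Nonempty V := hT.isConnected.nonempty
  by_contra hadj
  set e := _root_.eccent T u with he
  have hd0 : 0 < T.dist u v := hT.isConnected.pos_dist_of_ne hne
  have hd1 : T.dist u v ≠ 1 := fun h => hadj (SimpleGraph.dist_eq_one_iff_adj.mp h)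
  set d := T.dist u v with hduv
  have hd2 : 2 ≤ d := by omega
  -- path from u to v
  obtain ⟨Q0, hQ0⟩ := hT.isConnected.exists_walk_length_eq_dist u v
  have hQp : Q0.bypass.IsPath := Q0.bypass_isPath
  have hQlen : Q0.bypass.length = d := tree_path_len hT _ hQp
  cases hQ : Q0.bypass with
  | nil => rw [hQ] at hQlen; simp at hQlen; omega
  | cons h q =>
    rw [hQ] at hQp hQlen
    rename_i m
    rw [SimpleGraph.Walk.cons_isPath_iff] at hQp
    obtain ⟨hqp, hum⟩ := hQp
    simp only [SimpleGraph.Walk.length_cons] at hQlen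
    have hqlen : T.dist m v = d - 1 := by
      rw [← tree_path_len hT q hqp]; omega
    have hdum : T.dist u m = 1 := SimpleGraph.dist_eq_one_iff_adj.mpr h
    -- farthest vertex from m
    obtain ⟨w, hw⟩ := exists_eccent T m
    have hwm : e ≤ T.dist m w := hw ▸ hu m
    have hwu : T.dist u w ≤ e := dist_le_eccent T u w
    -- path from w to u
    obtain ⟨P0, hP0⟩ := hT.isConnected.exists_walk_length_eq_dist w u
    set P := P0.bypass with hP
    have hPp : P.IsPath := P0.bypass_isPath
    have hPlen : P.length = T.dist w u := tree_path_len hT _ hPp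
    have hmP : m ∉ P.support := by
      intro hmem
      have := tree_dist_split hT P hPp hmem
      have h1 : T.dist m u = 1 := by rw [SimpleGraph.dist_comm]; exact hdum
      have h2 : T.dist w m = T.dist m w := SimpleGraph.dist_comm ..
      have h3 : T.dist w u = T.dist u w := SimpleGraph.dist_comm ..
      omega
    -- extend P by the edge u-m: dist w m = dist w u + 1
    have hwm1 : T.dist w m = T.dist w u + 1 := by
      have hpath : (P.append (.cons h .nil)).IsPath := by
        rw [SimpleGraph.Walk.isPath_def, SimpleGraph.Walk.support_append]
        simp only [SimpleGraph.Walk.support_cons, SimpleGraph.Walk.support_nil]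
        refine List.Nodup.append hPp.support_nodup (by simp) ?_
        simpa [List.disjoint_right] using hmP
      have := tree_path_len hT _ hpath
      rw [SimpleGraph.Walk.length_append] at this
      simp only [SimpleGraph.Walk.length_cons, SimpleGraph.Walk.length_nil] at this
      omega
    -- supports of q and P are disjoint
    have hdisj : ∀ x, x ∈ q.support → x ∈ P.support → False := by
      intro x hxq hxP
      have e1 : T.dist m v = T.dist m x + T.dist x v := tree_dist_split hT q hqp hxq
      have e2 : T.dist w u = T.dist w x + T.dist x u := tree_dist_split hT P hPp hxP
      have e3 : T.dist w m ≤ T.dist w x + T.dist x m := hT.isConnected.dist_triangle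
      have e4 : T.dist x m ≤ T.dist x u + T.dist u m := hT.isConnected.dist_triangle
      have e5 : T.dist u v ≤ T.dist u x + T.dist x v := hT.isConnected.dist_triangle
      have c1 : T.dist x u = T.dist u x := SimpleGraph.dist_comm ..
      have c2 : T.dist x m = T.dist m x := SimpleGraph.dist_comm ..
      have c3 : T.dist w u = T.dist u w := SimpleGraph.dist_comm ..
      omega
    -- build the long path from v to w
    have humP : u ∈ P.support := SimpleGraph.Walk.end_mem_support P
    have hpath : (q.reverse.append (SimpleGraph.Walk.cons h.symm P.reverse)).IsPath := by
      rw [SimpleGraph.Walk.isPath_def, SimpleGraph.Walk.support_append]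
      simp only [SimpleGraph.Walk.support_cons, List.tail_cons,
        SimpleGraph.Walk.support_reverse]
      refine List.Nodup.append (by simpa using hqp.support_nodup)
        (by simpa using hPp.support_nodup) ?_
      intro x hx1 hx2
      simp only [List.mem_reverse] at hx1 hx2
      exact hdisj x hx1 hx2
    have hlen := tree_path_len hT _ hpath
    rw [SimpleGraph.Walk.length_append] at hlen
    simp only [SimpleGraph.Walk.length_cons, SimpleGraph.Walk.length_reverse] at hlen
    have hq' : q.length = d - 1 := by rw [tree_path_len hT q hqp]; exact hqlen
    have hvw : T.dist v w ≤ _root_.eccent T v := dist_le_eccent T v w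
    have hve : _root_.eccent T v = e := le_antisymm (hv u) (hu v)
    have hwm' : T.dist w m = T.dist m w := SimpleGraph.dist_comm ..
    have hwu' : T.dist w u = T.dist u w := SimpleGraph.dist_comm ..
    omega

end aux

/-- The Jordan center of a finite tree has one or two vertices, and if two,
they are adjacent. -/
theorem stmt6 {V : Type*} [Fintype V] (T : SimpleGraph V) (hT : T.IsTree) :
    (∃ z, jordanCenter T = {z}) ∨
      (∃ z w, z ≠ w ∧ T.Adj z w ∧ jordanCenter T = {z, w}) := by
  haveI : Nonempty V := hT.isConnected.nonempty
  obtain ⟨c, hc⟩ := Finite.exists_min (_root_.eccent T)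
  have hcmem : c ∈ jordanCenter T := hc
  by_cases hsing : ∀ x ∈ jordanCenter T, x = c
  · left
    exact ⟨c, Set.eq_singleton_iff_unique_mem.mpr ⟨hcmem, hsing⟩⟩
  · right
    push_neg at hsing
    obtain ⟨v, hvmem, hvc⟩ := hsing
    refine ⟨c, v, fun h => hvc h.symm, center_adj hT hcmem hvmem (fun h => hvc h.symm), ?_⟩
    ext x
    simp only [Set.mem_insert_iff, Set.mem_singleton_iff]
    constructor
    · intro hx
      by_contra hxcv
      push_neg at hxcv
      exact no_triangle hT (center_adj hT hx hcmem hxcv.1)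
        (center_adj hT hcmem hvmem fun h => hvc h.symm)
        (center_adj hT hx hvmem hxcv.2)
    · rintro (rfl | rfl) <;> assumption
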